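/- Let Γ ≤ S_n be a 2-transitive permutation group with n ≥ 3, and let z ∈ Z^n have nonnegative coordinates with min_i z_i = 0 and max_i z_i ≥ 2. If (Σ_{i=1}^n z_i) mod (n−1) ≤ max_i z_i, then the orbit polytope conv(Γz) contains an integral point which is not a vertex (i.e. z is not a core point). -/

import Mathlib

/-!
Write `S = ∑ zᵢ = (n - 1) q + r` with `0 ≤ r < n - 1`. Averaging `γ z` over the `γ ∈ Γ` with
`γ k = i` gives a point of `conv (Γ z)` with `z_k` in coordinate `i` and `(S - z_k) / (n - 1)`
elsewhere: 2-transitivity makes the stabiliser of `i` transitive on the other coordinates.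
Interpolating between the choices `z_k = M` and `z_k = 0` yields the integral point `y` with `r` in
coordinate `i` and `q` elsewhere, since `0 ≤ r ≤ M`. If `y` is not a vertex we are done. Otherwise
`z` takes only the values `r` and `q`, which must then be `0` and `M`; interpolating between `y` and
the same point with `r` moved to another coordinate gives an integral point with a coordinate equal
to `1`, a value `z` does not take.
-/

noncomputable section

open scoped RealInnerProductSpace

def permAct {n : ℕ} (γ : Equiv.Perm (Fin n)) (x : EuclideanSpace ℝ (Fin n)) :
    EuclideanSpace ℝ (Fin n) := WithLp.toLp 2 (fun i => x (γ⁻¹ i))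

def allOnes (n : ℕ) : EuclideanSpace ℝ (Fin n) := WithLp.toLp 2 (fun _ => 1)

def intVec {n : ℕ} (z : Fin n → ℤ) : EuclideanSpace ℝ (Fin n) := WithLp.toLp 2 (fun i => (z i : ℝ))

def orbitSet {n : ℕ} (Γ : Subgroup (Equiv.Perm (Fin n))) (x : EuclideanSpace ℝ (Fin n)) :
    Set (EuclideanSpace ℝ (Fin n)) := {y | ∃ γ ∈ Γ, y = permAct γ x}

def IsCorePoint {n : ℕ} (Γ : Subgroup (Equiv.Perm (Fin n))) (z : Fin n → ℤ) : Prop :=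
  ∀ y : Fin n → ℤ, intVec y ∈ convexHull ℝ (orbitSet Γ (intVec z)) →
    intVec y ∈ orbitSet Γ (intVec z)

def stabSub {n : ℕ} (Γ : Subgroup (Equiv.Perm (Fin n))) (v : EuclideanSpace ℝ (Fin n)) :
    Subgroup (Equiv.Perm (Fin n)) where
  carrier := {γ | γ ∈ Γ ∧ permAct γ v = v}
  one_mem' := ⟨Γ.one_mem, rfl⟩
  mul_mem' := fun {a b} ha hb => ⟨Γ.mul_mem ha.1 hb.1, by
    have h : permAct (a * b) v = permAct a (permAct b v) := rfl
    rw [h, hb.2, ha.2]⟩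
  inv_mem' := fun {a} ha => ⟨Γ.inv_mem ha.1, by
    conv_lhs => rw [← ha.2]
    have h : permAct a⁻¹ (permAct a v) = permAct (a⁻¹ * a) v := rfl
    rw [h, inv_mul_cancel]; rfl⟩

section PermAct

variable {n : ℕ}

@[simp]
lemma permAct_apply (γ : Equiv.Perm (Fin n)) (x : EuclideanSpace ℝ (Fin n)) (i : Fin n) :
    permAct γ x i = x (γ⁻¹ i) := rfl

lemma permAct_mul (g h : Equiv.Perm (Fin n)) (x : EuclideanSpace ℝ (Fin n)) :
    permAct (g * h) x = permAct g (permAct h x) := rfl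

lemma permAct_sum {ι : Type*} (g : Equiv.Perm (Fin n)) (s : Finset ι)
    (f : ι → EuclideanSpace ℝ (Fin n)) :
    permAct g (∑ i ∈ s, f i) = ∑ i ∈ s, permAct g (f i) := by
  ext j
  simp [WithLp.ofLp_sum, Finset.sum_apply]

lemma permAct_smul (g : Equiv.Perm (Fin n)) (c : ℝ) (x : EuclideanSpace ℝ (Fin n)) :
    permAct g (c • x) = c • permAct g x := rfl

lemma sum_permAct (g : Equiv.Perm (Fin n)) (x : EuclideanSpace ℝ (Fin n)) :
    ∑ j, permAct g x j = ∑ j, x j :=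
  Equiv.sum_comp g⁻¹ x

lemma apply_eq_of_permAct_eq {g : Equiv.Perm (Fin n)} {x : EuclideanSpace ℝ (Fin n)}
    (hx : permAct g x = x) (j : Fin n) : x (g j) = x j := by
  conv_lhs => rw [← hx]
  simp

end PermAct

section Orbit

variable {n : ℕ} {Γ : Subgroup (Equiv.Perm (Fin n))}

lemma self_mem_orbitSet (x : EuclideanSpace ℝ (Fin n)) : x ∈ orbitSet Γ x :=
  ⟨1, Γ.one_mem, rfl⟩

lemma permAct_mem_orbitSet {g : Equiv.Perm (Fin n)} (hg : g ∈ Γ)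
    {x y : EuclideanSpace ℝ (Fin n)} (hy : y ∈ orbitSet Γ x) : permAct g y ∈ orbitSet Γ x := by
  obtain ⟨γ, hγ, rfl⟩ := hy
  exact ⟨g * γ, Γ.mul_mem hg hγ, rfl⟩

lemma mem_orbitSet_symm {x y : EuclideanSpace ℝ (Fin n)} (hy : y ∈ orbitSet Γ x) :
    x ∈ orbitSet Γ y := by
  obtain ⟨γ, hγ, rfl⟩ := hy
  refine ⟨γ⁻¹, Γ.inv_mem hγ, ?_⟩
  rw [← permAct_mul, inv_mul_cancel]
  rfl

lemma orbitSet_subset_of_mem {x y : EuclideanSpace ℝ (Fin n)} (hy : y ∈ orbitSet Γ x) :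
    orbitSet Γ y ⊆ orbitSet Γ x := by
  rintro w ⟨γ, hγ, rfl⟩
  exact permAct_mem_orbitSet hγ hy

lemma exists_apply_eq_of_mem_orbitSet {x y : EuclideanSpace ℝ (Fin n)}
    (hy : y ∈ orbitSet Γ x) (j : Fin n) : ∃ k, y j = x k := by
  obtain ⟨γ, -, rfl⟩ := hy
  exact ⟨γ⁻¹ j, rfl⟩

end Orbit

section OrbitAvg

open scoped Classical

variable {n : ℕ}

def orbitAvg (H : Subgroup (Equiv.Perm (Fin n))) (x : EuclideanSpace ℝ (Fin n)) :
    EuclideanSpace ℝ (Fin n) :=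
  ∑ h : H, (Fintype.card H : ℝ)⁻¹ • permAct h x

variable (H : Subgroup (Equiv.Perm (Fin n))) (x : EuclideanSpace ℝ (Fin n))

lemma orbitAvg_apply (j : Fin n) :
    orbitAvg H x j = ∑ h : H, (Fintype.card H : ℝ)⁻¹ * x ((h : Equiv.Perm (Fin n))⁻¹ j) := by
  simp only [orbitAvg, WithLp.ofLp_sum, Finset.sum_apply, PiLp.smul_apply, permAct_apply,
    smul_eq_mul]

lemma orbitAvg_mem_convexHull {Γ : Subgroup (Equiv.Perm (Fin n))} (hH : H ≤ Γ)
    {w : EuclideanSpace ℝ (Fin n)} (hx : x ∈ orbitSet Γ w) :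
    orbitAvg H x ∈ convexHull ℝ (orbitSet Γ w) := by
  refine (convex_convexHull ℝ _).sum_mem (fun _ _ => by positivity) ?_
    (fun h _ => subset_convexHull ℝ _ (permAct_mem_orbitSet (hH h.2) hx))
  simp [Fintype.card_pos.ne']

lemma permAct_orbitAvg {g : Equiv.Perm (Fin n)} (hg : g ∈ H) :
    permAct g (orbitAvg H x) = orbitAvg H x := by
  rw [orbitAvg, permAct_sum]
  simp_rw [permAct_smul, ← permAct_mul]
  exact Fintype.sum_equiv (Equiv.mulLeft (⟨g, hg⟩ : H)) _ _ (fun _ => rfl)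

lemma orbitAvg_apply_of_forall_fixed {i : Fin n} (hi : ∀ g ∈ H, g i = i) :
    orbitAvg H x i = x i := by
  have hi' : ∀ h : H, (h : Equiv.Perm (Fin n))⁻¹ i = i := fun h =>
    Equiv.Perm.inv_eq_iff_eq.2 (hi h h.2).symm
  simp_rw [orbitAvg_apply, hi', Finset.sum_const, Finset.card_univ, nsmul_eq_mul]
  field_simp [Fintype.card_pos.ne']

lemma sum_orbitAvg : ∑ j, orbitAvg H x j = ∑ j, x j := by
  simp_rw [orbitAvg_apply]
  rw [Finset.sum_comm]
  simp_rw [← Finset.mul_sum, Equiv.sum_comp, Finset.sum_const, Finset.card_univ, nsmul_eq_mul]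
  field_simp [Fintype.card_pos.ne']

end OrbitAvg

section Spike

variable {n : ℕ}

def spike (i : Fin n) (u t : ℝ) : EuclideanSpace ℝ (Fin n) :=
  WithLp.toLp 2 (Function.update (fun _ => t) i u)

lemma spike_apply (i j : Fin n) (u t : ℝ) : spike i u t j = if j = i then u else t := by
  simp [spike, Function.update_apply]

lemma smul_spike_add_smul_spike (i : Fin n) (c c' u u' t t' : ℝ) :
    c • spike i u t + c' • spike i u' t' = spike i (c * u + c' * u') (c * t + c' * t') := by
  ext j
  simp only [PiLp.add_apply, PiLp.smul_apply, smul_eq_mul, spike_apply]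
  split_ifs <;> rfl

lemma intVec_update_const (i : Fin n) (u t : ℤ) :
    intVec (Function.update (fun _ => t) i u) = spike i u t := by
  ext j
  simp only [intVec, spike_apply, Function.update_apply]
  split_ifs <;> rfl

lemma natCast_sub_one_ne_zero [Nontrivial (Fin n)] : (n : ℝ) - 1 ≠ 0 := by
  have := Fintype.one_lt_card (α := Fin n)
  rw [Fintype.card_fin] at this
  have : (1 : ℝ) < n := by exact_mod_cast this
  linarith

lemma sum_eq_add_mul_of_forall_ne {x : EuclideanSpace ℝ (Fin n)} {i : Fin n} {t : ℝ}
    (hx : ∀ k, k ≠ i → x k = t) : ∑ k, x k = x i + (n - 1) * t := by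
  rw [← Finset.add_sum_erase _ _ (Finset.mem_univ i),
    Finset.sum_congr rfl fun k hk => hx k (Finset.ne_of_mem_erase hk), Finset.sum_const,
    Finset.card_erase_of_mem (Finset.mem_univ i), Finset.card_univ, Fintype.card_fin,
    nsmul_eq_mul, Nat.cast_pred (Fin.pos i)]

lemma sum_spike (i : Fin n) (u t : ℝ) : ∑ j, spike i u t j = u + (n - 1) * t := by
  rw [sum_eq_add_mul_of_forall_ne fun k hk => by rw [spike_apply, if_neg hk], spike_apply,
    if_pos rfl]

lemma eq_spike_of_apply_eq {x : EuclideanSpace ℝ (Fin n)} {i : Fin n}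
    (hx : ∀ j j', j ≠ i → j' ≠ i → x j = x j') :
    x = spike i (x i) ((∑ j, x j - x i) / (n - 1)) := by
  ext j
  rw [spike_apply]
  split_ifs with hj
  · rw [hj]
  · have : Nontrivial (Fin n) := ⟨⟨j, i, hj⟩⟩
    rw [sum_eq_add_mul_of_forall_ne fun k hk => hx k j hk hj]
    field_simp [natCast_sub_one_ne_zero]
    ring

end Spike

section TwoTransitive

def IsTwoTransitive {n : ℕ} (Γ : Subgroup (Equiv.Perm (Fin n))) : Prop :=
  ∀ x1 x2 y1 y2 : Fin n, x1 ≠ x2 → y1 ≠ y2 → ∃ γ ∈ Γ, γ x1 = y1 ∧ γ x2 = y2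

variable {n : ℕ} {Γ : Subgroup (Equiv.Perm (Fin n))}

lemma spike_mem_convexHull_orbitSet [Nontrivial (Fin n)]
    (h2t : IsTwoTransitive Γ) (x : EuclideanSpace ℝ (Fin n))
    (i k : Fin n) :
    spike i (x k) ((∑ j, x j - x k) / (n - 1)) ∈ convexHull ℝ (orbitSet Γ x) := by
  obtain ⟨k', hk'⟩ := exists_ne k
  obtain ⟨i', hi'⟩ := exists_ne i
  obtain ⟨γ, hγ, hγk, -⟩ := h2t k k' i i' hk'.symm hi'.symm
  let H := Γ ⊓ MulAction.stabilizer (Equiv.Perm (Fin n)) i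
  have hHi : ∀ g ∈ H, g i = i := fun g hg => hg.2
  have hc := orbitAvg_mem_convexHull H (permAct γ x) inf_le_left
    (permAct_mem_orbitSet hγ (self_mem_orbitSet x))
  have hci : orbitAvg H (permAct γ x) i = x k := by
    rw [orbitAvg_apply_of_forall_fixed _ _ hHi, permAct_apply,
      Equiv.Perm.inv_eq_iff_eq.2 hγk.symm]
  have hconst : ∀ j j', j ≠ i → j' ≠ i →
      orbitAvg H (permAct γ x) j = orbitAvg H (permAct γ x) j' := by
    intro j j' hj hj'
    obtain ⟨g, hg, hgi, hgj⟩ := h2t i j i j' hj.symm hj'.symm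
    rw [← hgj, apply_eq_of_permAct_eq (permAct_orbitAvg H _ ⟨hg, hgi⟩)]
  rwa [eq_spike_of_apply_eq hconst, hci, sum_orbitAvg, sum_permAct] at hc

lemma spike_mem_convexHull_of_mem_Icc [Nontrivial (Fin n)]
    (h2t : IsTwoTransitive Γ) (x : EuclideanSpace ℝ (Fin n))
    {a b : Fin n} {u : ℝ} (hu : u ∈ Set.Icc (x b) (x a)) :
    spike a u ((∑ j, x j - u) / (n - 1)) ∈ convexHull ℝ (orbitSet Γ x) := by
  have ha := spike_mem_convexHull_orbitSet h2t x a a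
  have hb := spike_mem_convexHull_orbitSet h2t x a b
  obtain hba | hba := (hu.1.trans hu.2).eq_or_lt
  · rwa [show u = x a by linarith [hu.1, hu.2]]
  set s := (u - x b) / (x a - x b)
  have hs : s ∈ Set.Icc 0 1 :=
    ⟨div_nonneg (by linarith [hu.1]) (by linarith),
      (div_le_one (by linarith)).2 (by linarith [hu.2])⟩
  have hcomb : spike a u ((∑ j, x j - u) / (n - 1)) =
      (1 - s) • spike a (x b) ((∑ j, x j - x b) / (n - 1)) +
        s • spike a (x a) ((∑ j, x j - x a) / (n - 1)) := by
    have hsu : s * (x a - x b) = u - x b := div_mul_cancel₀ _ (sub_pos.2 hba).ne'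
    rw [smul_spike_add_smul_spike]
    congr 1
    · linear_combination -hsu
    · field_simp [natCast_sub_one_ne_zero]
      linear_combination hsu
  rw [hcomb]
  exact convex_convexHull ℝ _ hb ha (by linarith [hs.2]) hs.1 (by ring)

lemma apply_eq_or_of_spike_mem_orbitSet {x : EuclideanSpace ℝ (Fin n)} {i : Fin n} {u t : ℝ}
    (h : spike i u t ∈ orbitSet Γ x) (j : Fin n) : x j = u ∨ x j = t := by
  obtain ⟨k, hk⟩ := exists_apply_eq_of_mem_orbitSet (mem_orbitSet_symm h) j
  rw [hk, spike_apply]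
  split_ifs
  exacts [Or.inl rfl, Or.inr rfl]

lemma spike_mem_convexHull_of_spike_mem_orbitSet [Nontrivial (Fin n)]
    (h2t : IsTwoTransitive Γ) {x : EuclideanSpace ℝ (Fin n)} {i : Fin n} {u t : ℝ}
    (h : spike i u t ∈ orbitSet Γ x) (j : Fin n) : spike j u t ∈ convexHull ℝ (orbitSet Γ x) := by
  have := spike_mem_convexHull_orbitSet h2t (spike i u t) j i
  rw [sum_spike, spike_apply, if_pos rfl, add_sub_cancel_left,
    mul_div_cancel_left₀ _ natCast_sub_one_ne_zero] at this
  exact convexHull_mono (orbitSet_subset_of_mem h) this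

lemma exists_intVec_mem_convexHull_not_mem_orbitSet
    (h2t : IsTwoTransitive Γ) {x : EuclideanSpace ℝ (Fin n)} {a b : Fin n} (hab : a ≠ b) {r q c : ℤ}
    (hc : min r q < c ∧ c < max r q) (h : spike a r q ∈ orbitSet Γ x) :
    ∃ y : Fin n → ℤ, intVec y ∈ convexHull ℝ (orbitSet Γ x) ∧ intVec y ∉ orbitSet Γ x := by
  have : Nontrivial (Fin n) := ⟨⟨a, b, hab⟩⟩
  refine ⟨Function.update (Function.update (fun _ => q) a c) b (r + q - c), ?_, fun hy => ?_⟩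
  · obtain ⟨s, hs, hsc⟩ : ∃ s ∈ Set.Icc (0 : ℝ) 1, s * (q - r) = c - r := by
      have hqr : (q : ℝ) - r ≠ 0 := by exact_mod_cast (show q - r ≠ 0 by omega)
      refine ⟨(c - r) / (q - r), ?_, div_mul_cancel₀ _ hqr⟩
      rcases lt_or_gt_of_ne (show r ≠ q by omega) with hrq | hrq
      · have : (r : ℝ) < c ∧ (c : ℝ) < q := by exact_mod_cast (show r < c ∧ c < q by omega)
        exact ⟨div_nonneg (by linarith) (by linarith), (div_le_one (by linarith)).2 (by linarith)⟩
      · have : (q : ℝ) < c ∧ (c : ℝ) < r := by exact_mod_cast (show q < c ∧ c < r by omega)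
        exact ⟨div_nonneg_of_nonpos (by linarith) (by linarith),
          (div_le_one_of_neg (by linarith)).2 (by linarith)⟩
    have hcomb : intVec (Function.update (Function.update (fun _ => q) a c) b (r + q - c)) =
        (1 - s) • spike a r q + s • spike b r q := by
      ext j
      simp only [intVec, PiLp.add_apply, PiLp.smul_apply, smul_eq_mul, spike_apply,
        Function.update_apply]
      split_ifs with hjb hja hja
      · exact absurd (hja.symm.trans hjb) hab
      · push_cast
        linear_combination hsc
      · linear_combination -hsc
      · ring
    rw [hcomb]
    exact convex_convexHull ℝ _ (spike_mem_convexHull_of_spike_mem_orbitSet h2t h a)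
      (spike_mem_convexHull_of_spike_mem_orbitSet h2t h b) (by linarith [hs.2]) hs.1 (by ring)
  · obtain ⟨k, hk⟩ := exists_apply_eq_of_mem_orbitSet hy a
    have hc' := apply_eq_or_of_spike_mem_orbitSet h k
    rw [← hk] at hc'
    simp only [intVec, Function.update_apply, if_neg hab, if_true, Int.cast_inj] at hc'
    omega

end TwoTransitive

theorem stmt5_general {n : ℕ} (Γ : Subgroup (Equiv.Perm (Fin n)))
    (h2t : ∀ x1 x2 y1 y2 : Fin n, x1 ≠ x2 → y1 ≠ y2 →
      ∃ γ ∈ Γ, γ x1 = y1 ∧ γ x2 = y2)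
    (z : Fin n → ℤ) (hmin : ∃ i, z i = 0)
    (M : ℤ) (hMmem : ∃ i, z i = M) (hM2 : 2 ≤ M)
    (hmod : (∑ i, z i) % ((n : ℤ) - 1) ≤ M) :
    ∃ y : Fin n → ℤ, intVec y ∈ convexHull ℝ (orbitSet Γ (intVec z)) ∧
      intVec y ∉ orbitSet Γ (intVec z) := by
  obtain ⟨b, hb⟩ := hmin
  obtain ⟨a, ha⟩ := hMmem
  have hab : a ≠ b := by rintro rfl; omega
  have : Nontrivial (Fin n) := ⟨⟨a, b, hab⟩⟩
  set q := (∑ i, z i) / ((n : ℤ) - 1)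
  set r := (∑ i, z i) % ((n : ℤ) - 1)
  have hr : 0 ≤ r := Int.emod_nonneg _ (by exact_mod_cast natCast_sub_one_ne_zero (n := n))
  have hq : (∑ j, intVec z j - r) / (n - 1) = q := by
    have hqr : ((n : ℤ) - 1) * q + r = ∑ i, z i := Int.mul_ediv_add_emod _ _
    rw [div_eq_iff natCast_sub_one_ne_zero]
    simp only [intVec, ← Int.cast_sum, ← hqr]
    push_cast
    ring
  have hy : spike a r q ∈ convexHull ℝ (orbitSet Γ (intVec z)) := by
    rw [← hq]
    exact spike_mem_convexHull_of_mem_Icc h2t (intVec z) (b := b)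
      ⟨by simp [intVec, hb, hr], by simp [intVec, ha, hmod]⟩
  by_cases hy' : spike a r q ∈ orbitSet Γ (intVec z)
  · have hval : ∀ j, z j = r ∨ z j = q := fun j => by
      simpa [intVec] using apply_eq_or_of_spike_mem_orbitSet hy' j
    exact exists_intVec_mem_convexHull_not_mem_orbitSet h2t hab (c := 1)
      (by rcases hval a with h | h <;> rcases hval b with h' | h' <;> omega) hy'
  · exact ⟨Function.update (fun _ => q) a r, by rwa [intVec_update_const],
      by rwa [intVec_update_const]⟩

theorem stmt5 {n : ℕ} (hn : 3 ≤ n) (Γ : Subgroup (Equiv.Perm (Fin n)))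
    (h2t : ∀ x1 x2 y1 y2 : Fin n, x1 ≠ x2 → y1 ≠ y2 →
      ∃ γ ∈ Γ, γ x1 = y1 ∧ γ x2 = y2)
    (z : Fin n → ℤ) (hpos : ∀ i, 0 ≤ z i) (hmin : ∃ i, z i = 0)
    (M : ℤ) (hM : ∀ i, z i ≤ M) (hMmem : ∃ i, z i = M) (hM2 : 2 ≤ M)
    (hmod : (∑ i, z i) % ((n : ℤ) - 1) ≤ M) :
    ∃ y : Fin n → ℤ, intVec y ∈ convexHull ℝ (orbitSet Γ (intVec z)) ∧
      intVec y ∉ orbitSet Γ (intVec z) :=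
  stmt5_general Γ h2t z hmin M hMmem hM2 hmod
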